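/- arXiv:1307.3113 — 2 statements merged into one kernel-verified Lean document; each statement's English description precedes it below -/
import Mathlib

section
/- In a connected Nash equilibrium graph of the network creation game with parameter α, if a vertex x has degree at least α, then every vertex of the graph is at distance at most 3 from x. -/
open scoped ENNReal

section NetworkCreation

variable {V : Type*} [Fintype V] [DecidableEq V]

/-- The undirected network formed by a strategy profile `S`:
`v` and `w` are adjacent iff one of them bought the edge to the other. -/
def netGraph (S : V → Finset V) : SimpleGraph V where
  Adj v w := v ≠ w ∧ (w ∈ S v ∨ v ∈ S w)
  symm := ⟨fun _ _ h => ⟨h.1.symm, h.2.symm⟩⟩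
  loopless := ⟨fun _ h => h.1 rfl⟩

instance (S : V → Finset V) : DecidableRel (netGraph S).Adj :=
  fun v w => inferInstanceAs (Decidable (v ≠ w ∧ (w ∈ S v ∨ v ∈ S w)))

/-- Individual cost of agent `v`: `α` per bought edge, plus the sum of the
graph distances from `v` to all vertices (`⊤` if some vertex is unreachable). -/
noncomputable def netCost (α : ℝ) (S : V → Finset V) (v : V) : ℝ≥0∞ :=
  ENNReal.ofReal α * (S v).card + ∑ w, ((netGraph S).edist v w : ℝ≥0∞)

/-- (Weak) Nash equilibrium: no agent can strictly decrease its own cost by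
unilaterally switching its bought-edge set to any other set of other vertices. -/
def IsNash (α : ℝ) (S : V → Finset V) : Prop :=
  ∀ (v : V) (T : Finset V), v ∉ T →
    netCost α S v ≤ netCost α (Function.update S v T) v

/-- Total social cost of a strategy profile. -/
noncomputable def socialCost (α : ℝ) (S : V → Finset V) : ℝ≥0∞ :=
  ∑ v, netCost α S v

end NetworkCreation

/-! If some `w` were at distance at least `4` from `x`, then `w` could buy the edge `wx`: this
costs `α` but shortens its distance to `x` by at least `3` and to each of the `deg x ≥ α`
neighbours of `x` by at least `1`, a strict gain contradicting the Nash condition. -/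

namespace SimpleGraph

variable {V : Type*} [DecidableEq V] {G H : SimpleGraph V} [DecidableRel G.Adj] {w x : V}

lemma dist_add_ite_add_ite_le (hGH : G ≤ H) (hG : G.Connected) (hwx : H.Adj w x)
    (hfar : 4 ≤ G.dist w x) (v : V) :
    H.dist w v + ((if v = x then 3 else 0) + (if G.Adj x v then 1 else 0)) ≤ G.dist w v := by
  have hH : H.Connected := hG.mono hGH
  have hHwx : H.dist w x = 1 := dist_eq_one_iff_adj.mpr hwx
  by_cases hvx : v = x
  · subst hvx
    rw [if_pos rfl, if_neg G.irrefl]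
    omega
  by_cases hxv : G.Adj x v
  · have hHwv : H.dist w v ≤ H.dist w x + H.dist x v := hH.dist_triangle
    have hGwx : G.dist w x ≤ G.dist w v + G.dist v x := hG.dist_triangle
    rw [dist_eq_one_iff_adj.mpr (hGH hxv)] at hHwv
    rw [dist_eq_one_iff_adj.mpr hxv.symm] at hGwx
    rw [if_neg hvx, if_pos hxv]
    omega
  · simpa [hvx, hxv] using (hG w v).dist_anti hGH

lemma sum_dist_add_degree_le [Fintype V] (hGH : G ≤ H) (hG : G.Connected) (hwx : H.Adj w x)
    (hfar : 4 ≤ G.dist w x) :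
    ∑ v, H.dist w v + 3 + G.degree x ≤ ∑ v, G.dist w v := by
  have hbonus : ∑ v, ((if v = x then 3 else 0) + (if G.Adj x v then 1 else 0)) =
      3 + G.degree x := by
    rw [Finset.sum_add_distrib, Finset.sum_ite_eq', Finset.sum_boole, Nat.cast_id,
      ← card_neighborFinset_eq_degree, neighborFinset_eq_filter, if_pos (Finset.mem_univ x)]
  calc ∑ v, H.dist w v + 3 + G.degree x
      = ∑ v, (H.dist w v + ((if v = x then 3 else 0) + (if G.Adj x v then 1 else 0))) := by
        rw [Finset.sum_add_distrib, hbonus, add_assoc]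
    _ ≤ ∑ v, G.dist w v :=
        Finset.sum_le_sum fun v _ => dist_add_ite_add_ite_le hGH hG hwx hfar v

end SimpleGraph

section NetworkCreation

variable {V : Type*} [DecidableEq V]

-- Erasing `w` keeps the deviation admissible for `IsNash` even when `w ∈ S w`.
def buyEdge (S : V → Finset V) (w x : V) : V → Finset V :=
  Function.update S w (insert x ((S w).erase w))

lemma notMem_buyEdge_self {S : V → Finset V} {w x : V} (hwx : w ≠ x) :
    w ∉ buyEdge S w x w := by
  simp [buyEdge, hwx]

lemma card_buyEdge_self_le (S : V → Finset V) (w x : V) :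
    (buyEdge S w x w).card ≤ (S w).card + 1 := by
  rw [buyEdge, Function.update_self]
  exact (Finset.card_insert_le _ _).trans (Nat.add_le_add_right Finset.card_erase_le 1)

lemma netGraph_le_buyEdge (S : V → Finset V) (w x : V) :
    netGraph S ≤ netGraph (buyEdge S w x) := by
  rintro a b ⟨hab, h⟩
  refine ⟨hab, ?_⟩
  simp only [buyEdge, Function.update_apply]
  rcases h with h | h
  · left
    split_ifs with ha
    · subst ha; exact Finset.mem_insert_of_mem (Finset.mem_erase.mpr ⟨hab.symm, h⟩)
    · exact h
  · right
    split_ifs with hb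
    · subst hb; exact Finset.mem_insert_of_mem (Finset.mem_erase.mpr ⟨hab, h⟩)
    · exact h

lemma netGraph_buyEdge_adj (S : V → Finset V) {w x : V} (hwx : w ≠ x) :
    (netGraph (buyEdge S w x)).Adj w x :=
  ⟨hwx, Or.inl (by simp [buyEdge])⟩

omit [DecidableEq V] in
lemma netCost_eq_of_connected [Fintype V] (α : ℝ) {S : V → Finset V}
    (hS : (netGraph S).Connected) (v : V) :
    netCost α S v =
      ENNReal.ofReal α * (S v).card + ((∑ w, (netGraph S).dist v w : ℕ) : ℝ≥0∞) := by
  rw [netCost, Nat.cast_sum]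
  congr 1
  refine Finset.sum_congr rfl fun w _ => ?_
  rw [← (hS v w).coe_dist_eq_edist]
  rfl

lemma IsNash.sum_dist_le [Fintype V] {α : ℝ} {S : V → Finset V} (hNash : IsNash α S)
    (hconn : (netGraph S).Connected) {w x : V} (hwx : w ≠ x) :
    ((∑ v, (netGraph S).dist w v : ℕ) : ℝ≥0∞) ≤
      ENNReal.ofReal α + ((∑ v, (netGraph (buyEdge S w x)).dist w v : ℕ) : ℝ≥0∞) := by
  have hconn' := hconn.mono (netGraph_le_buyEdge S w x)
  have h := hNash w (buyEdge S w x w) (notMem_buyEdge_self hwx)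
  rw [show Function.update S w (buyEdge S w x w) = buyEdge S w x by simp [buyEdge],
    netCost_eq_of_connected α hconn, netCost_eq_of_connected α hconn'] at h
  have hcard : ENNReal.ofReal α * (buyEdge S w x w).card ≤
      ENNReal.ofReal α * (S w).card + ENNReal.ofReal α := by
    calc ENNReal.ofReal α * (buyEdge S w x w).card
        ≤ ENNReal.ofReal α * ((S w).card + 1 : ℕ) := by
          gcongr; exact card_buyEdge_self_le S w x
      _ = ENNReal.ofReal α * (S w).card + ENNReal.ofReal α := by push_cast; ring
  have hfin : ENNReal.ofReal α * (S w).card ≠ ⊤ :=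
    ENNReal.mul_ne_top ENNReal.ofReal_ne_top (ENNReal.natCast_ne_top _)
  refine (ENNReal.add_le_add_iff_left hfin).mp ?_
  calc ENNReal.ofReal α * (S w).card + ((∑ v, (netGraph S).dist w v : ℕ) : ℝ≥0∞)
      ≤ ENNReal.ofReal α * (buyEdge S w x w).card +
          ((∑ v, (netGraph (buyEdge S w x)).dist w v : ℕ) : ℝ≥0∞) := h
    _ ≤ ENNReal.ofReal α * (S w).card + ENNReal.ofReal α +
          ((∑ v, (netGraph (buyEdge S w x)).dist w v : ℕ) : ℝ≥0∞) := by gcongr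
    _ = _ := by ring

end NetworkCreation

theorem stmt2_general {V : Type*} [Fintype V] [DecidableEq V] (α : ℝ)
    (S : V → Finset V) (hNash : IsNash α S)
    (hconn : (netGraph S).Connected) (x : V)
    (hdeg : α ≤ ((netGraph S).degree x : ℝ)) :
    ∀ w : V, (netGraph S).dist x w ≤ 3 := by
  intro w
  by_contra! hfar
  rw [SimpleGraph.dist_comm] at hfar
  have hwx : w ≠ x := by rintro rfl; simp at hfar
  have hsaving := SimpleGraph.sum_dist_add_degree_le (netGraph_le_buyEdge S w x) hconn
    (netGraph_buyEdge_adj S hwx) hfar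
  have hαdeg : ENNReal.ofReal α ≤ ((netGraph S).degree x : ℝ≥0∞) := by
    simpa using ENNReal.ofReal_le_ofReal hdeg
  have hcost := (hNash.sum_dist_le hconn hwx).trans (add_le_add_left hαdeg _)
  norm_cast at hcost
  omega

/-- In a connected Nash equilibrium, any vertex `x` of degree at least `α` is
within distance 3 of every vertex. -/
theorem stmt2 {V : Type*} [Fintype V] [DecidableEq V] (α : ℝ) (hα : 0 < α)
    (S : V → Finset V) (hS : ∀ v, v ∉ S v) (hNash : IsNash α S)
    (hconn : (netGraph S).Connected) (x : V)
    (hdeg : α ≤ ((netGraph S).degree x : ℝ)) :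
    ∀ w : V, (netGraph S).dist x w ≤ 3 :=
  stmt2_general α S hNash hconn x hdeg
end

section
/- In a connected Nash equilibrium graph of the network creation game with non-integral parameter α > 2 and n > α³ vertices, for any vertex v with levels N_1, N_2 (vertices at distance 1 and 2 from v), any vertex w ∈ N_2 buys at most |N_1|·α/(α−⌊α⌋) edges to other vertices of N_2. -/
open scoped ENNReal

/-!
Fix a shortest path from `w` to each vertex `y`. When `w` replaces its `d` bought edges into `N₂`
by edges to all of `N₁`, that path survives unless it starts with a deleted edge `wx`. Then `y` is
still reached through `N₁` and `x` with one extra step, and with none unless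
`d(v,y) ≥ d(x,y) + 2`: otherwise a shortest path from `v` to `y` avoids `w` and is entered from
`N₁`. Those `y` get closer to `v` if `v` buys the edge `vx`, so the Nash condition for `v` allows
at most `⌊α⌋` of them per `x`. Hence `w`'s distance sum grows by at most `d⌊α⌋` while its edge
cost drops by at least `(d - |N₁|)α`, and the Nash condition for `w` gives `d (α - ⌊α⌋) ≤ |N₁| α`.
-/

open Finset SimpleGraph Function

namespace SimpleGraph

variable {V : Type*} {G G' : SimpleGraph V} {a b u w : V}

theorem Walk.edist_add_edist_le_length [DecidableEq V] (p : G.Walk a b) (hw : w ∈ p.support) :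
    G.edist a w + G.edist w b ≤ p.length := by
  have hlen := congrArg Walk.length (p.take_spec hw)
  rw [Walk.length_append] at hlen
  rw [← hlen, Nat.cast_add]
  exact add_le_add (Walk.edist_le _) (Walk.edist_le _)

theorem Walk.edist_le_length_of_notMem_support
    (h : ∀ x y, x ≠ w → y ≠ w → G.Adj x y → G'.Adj x y) (p : G.Walk a b) (hw : w ∉ p.support) :
    G'.edist a b ≤ p.length := by
  induction p with
  | nil => simp
  | @cons a c b hac q ih =>
    rw [support_cons, List.mem_cons, not_or] at hw
    have hc : c ≠ w := fun hcw => hw.2 (hcw ▸ q.start_mem_support)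
    calc G'.edist a b ≤ G'.edist a c + G'.edist c b := SimpleGraph.edist_triangle
      _ ≤ 1 + q.length :=
          add_le_add (edist_eq_one_iff_adj.mpr (h a c (Ne.symm hw.1) hc hac)).le (ih hw.2)
      _ = (Walk.cons hac q).length := by
          rw [Walk.length_cons, Nat.cast_add, Nat.cast_one, add_comm]

theorem Reachable.exists_adj_walk_notMem_support (hr : G.Reachable a b) (hab : a ≠ b) :
    ∃ z, G.Adj a z ∧ ∃ r : G.Walk z b, a ∉ r.support ∧ (r.length : ℕ∞) + 1 = G.edist a b := by
  obtain ⟨p, hpath, hp⟩ := hr.exists_path_of_dist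
  cases p with
  | nil => exact absurd rfl hab
  | cons haz r =>
    refine ⟨_, haz, r, ((Walk.cons_isPath_iff _ _).mp hpath).2, ?_⟩
    rw [← hr.coe_dist_eq_edist, ← hp, Walk.length_cons, Nat.cast_add, Nat.cast_one]

theorem ne_of_adj_of_edist_eq_two (hw : G.edist a w = 2) (hu : G.Adj a u) : u ≠ w := by
  rintro rfl
  rw [edist_eq_one_iff_adj.mpr hu] at hw
  exact absurd hw (by decide)

theorem ncard_setOf_edist_eq_one (v : V) [Fintype (G.neighborSet v)] :
    {y | G.edist v y = 1}.ncard = G.degree v := by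
  have : {y | G.edist v y = 1} = G.neighborFinset v := by
    ext y
    simp [edist_eq_one_iff_adj]
  rw [this, Set.ncard_coe_finset, card_neighborFinset_eq_degree]

end SimpleGraph

section NetGraph

variable {V : Type*} [DecidableEq V] {S S' : V → Finset V} {T : Finset V} {u x y : V}

theorem netGraph_mono (h : ∀ c, S c ⊆ insert c (S' c)) : netGraph S ≤ netGraph S' := by
  rintro a b ⟨hab, hb⟩
  refine ⟨hab, hb.imp (fun hb => ?_) (fun ha => ?_)⟩
  · exact (mem_insert.mp (h a hb)).resolve_left (Ne.symm hab)
  · exact (mem_insert.mp (h b ha)).resolve_left hab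

theorem netGraph_update_adj_of_ne (hx : x ≠ u) (hy : y ≠ u) :
    (netGraph (update S u T)).Adj x y ↔ (netGraph S).Adj x y := by
  simp [netGraph, update_of_ne hx, update_of_ne hy]

theorem netGraph_update_adj_self :
    (netGraph (update S u T)).Adj u y ↔ u ≠ y ∧ (y ∈ T ∨ u ∈ S y) := by
  by_cases hy : y = u
  · subst hy
    simp [netGraph]
  · simp [netGraph, update_of_ne hy]

theorem edist_netGraph_update_le_length (p : (netGraph S).Walk x y) (hp : u ∉ p.support) :
    (netGraph (update S u T)).edist x y ≤ p.length :=
  p.edist_le_length_of_notMem_support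
    (fun _ _ ha hb hab => (netGraph_update_adj_of_ne ha hb).mpr hab) hp

end NetGraph

section Nash

variable {V : Type*} [Fintype V] {α : ℝ} {S : V → Finset V}

theorem netCost_eq_ofReal (hα : 0 ≤ α) {u : V} (hu : ∀ y, (netGraph S).Reachable u y) :
    netCost α S u = ENNReal.ofReal (α * #(S u) + ∑ y, ((netGraph S).dist u y : ℝ)) := by
  rw [netCost, ENNReal.ofReal_add (by positivity) (by positivity), ENNReal.ofReal_mul hα,
    ENNReal.ofReal_natCast, ENNReal.ofReal_sum_of_nonneg fun _ _ => by positivity]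
  congr 1
  refine sum_congr rfl fun y _ => ?_
  rw [← (hu y).coe_dist_eq_edist, ENat.toENNReal_coe, ENNReal.ofReal_natCast]

theorem IsNash.mul_card_add_card_le [DecidableEq V] (hα : 0 ≤ α) (hNash : IsNash α S)
    (hconn : (netGraph S).Connected) {u : V} {T : Finset V} (huT : u ∉ T) {A B : Finset V}
    (h : ∀ y, (netGraph (update S u T)).edist u y + (if y ∈ B then 1 else 0) ≤
      (netGraph S).edist u y + (if y ∈ A then 1 else 0)) :
    α * #(S u) + #B ≤ α * #T + #A := by
  set G' := netGraph (update S u T)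
  have hreach : ∀ y, G'.Reachable u y := fun y => reachable_of_edist_ne_top <|
    ne_top_of_le_ne_top (by split_ifs <;> simp [← (hconn u y).coe_dist_eq_edist])
      (le_self_add.trans (h y))
  have hdist : ∀ y, (G'.dist u y : ℝ) + (if y ∈ B then 1 else 0) ≤
      (netGraph S).dist u y + (if y ∈ A then 1 else 0) := fun y => by
    have := h y
    rw [← (hreach y).coe_dist_eq_edist, ← (hconn u y).coe_dist_eq_edist] at this
    split_ifs at this ⊢ <;> exact_mod_cast this
  have hcost := hNash u T huT
  rw [netCost_eq_ofReal hα (hconn u), netCost_eq_ofReal hα hreach, update_self,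
    ENNReal.ofReal_le_ofReal_iff (by positivity)] at hcost
  have hsum := sum_le_sum fun y (_ : y ∈ univ) => hdist y
  simp only [sum_add_distrib, sum_boole, filter_mem_eq_inter, univ_inter] at hsum
  linarith

variable [DecidableEq V]

/-- The vertices whose distance from `v` drops if `v` buys the edge `vx`. -/
noncomputable def closerVia (S : V → Finset V) (v x : V) : Finset V :=
  {y | (netGraph S).edist x y + 2 ≤ (netGraph S).edist v y}

theorem IsNash.card_closerVia_le (hα : 0 ≤ α) (hNash : IsNash α S)
    (hconn : (netGraph S).Connected) {v x : V} (hx : 2 ≤ (netGraph S).edist v x) :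
    (#(closerVia S v x) : ℝ) ≤ α := by
  set G := netGraph S
  have hvx : v ≠ x := by
    rintro rfl
    simp at hx
  set T := insert x ((S v).erase v)
  have hvT : v ∉ T := by simp [T, hvx]
  set G'' := netGraph (update S v T)
  have hle : G ≤ G'' := netGraph_mono fun c => by
    by_cases hc : c = v
    · subst hc
      intro y hy
      by_cases hyc : y = c <;> simp [T, hy, hyc]
    · simp [update_of_ne hc, subset_insert]
  have hadj : G''.Adj v x := netGraph_update_adj_self.mpr ⟨hvx, Or.inl (mem_insert_self _ _)⟩
  have hcost := hNash.mul_card_add_card_le hα hconn hvT (A := ∅) (B := closerVia S v x)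
    fun y => by
      rw [if_neg (notMem_empty y), add_zero]
      split_ifs with hy
      · calc G''.edist v y + 1 ≤ G''.edist v x + G''.edist x y + 1 := by
              gcongr
              exact SimpleGraph.edist_triangle
          _ ≤ 1 + G.edist x y + 1 := by
              gcongr
              exact (edist_eq_one_iff_adj.mpr hadj).le
          _ = G.edist x y + 2 := by ring
          _ ≤ G.edist v y := by simpa [closerVia] using hy
      · simpa using edist_anti hle
  have hT : (#T : ℝ) ≤ #(S v) + 1 := by
    exact_mod_cast (card_insert_le _ _).trans (Nat.succ_le_succ card_erase_le)
  rw [card_empty, Nat.cast_zero, add_zero] at hcost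
  linarith [mul_le_mul_of_nonneg_left hT hα]

theorem IsNash.card_biUnion_closerVia_le (hα : 0 ≤ α) (hNash : IsNash α S)
    (hconn : (netGraph S).Connected) {v : V} {D : Finset V}
    (hD : ∀ x ∈ D, 2 ≤ (netGraph S).edist v x) :
    (#(D.biUnion (closerVia S v)) : ℝ) ≤ #D * ⌊α⌋ := by
  have hx : ∀ x ∈ D, (#(closerVia S v x) : ℝ) ≤ ⌊α⌋ := fun x hxD => by
    have : ((#(closerVia S v x) : ℤ) : ℝ) ≤ α := by
      exact_mod_cast hNash.card_closerVia_le hα hconn (hD x hxD)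
    exact_mod_cast Int.le_floor.mpr this
  calc (#(D.biUnion (closerVia S v)) : ℝ) ≤ ∑ x ∈ D, (#(closerVia S v x) : ℝ) := by
        exact_mod_cast card_biUnion_le
    _ ≤ ∑ _x ∈ D, (⌊α⌋ : ℝ) := sum_le_sum hx
    _ = #D * ⌊α⌋ := by rw [sum_const, nsmul_eq_mul]

end Nash

section Redirect

variable {V : Type*} [Fintype V] [DecidableEq V] {S : V → Finset V} {v w u y z : V}

/-- The deviation `(S w \ N₂) ∪ N₁` of `w`, where `Nₖ` is the `k`-th distance level of `v`. -/
noncomputable def redirect (S : V → Finset V) (v w : V) : Finset V :=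
  {x ∈ S w | (netGraph S).edist v x ≠ 2} ∪ (netGraph S).neighborFinset v

theorem notMem_redirect (hw : (netGraph S).edist v w = 2) : w ∉ redirect S v w := by
  simp only [redirect, mem_union, mem_filter, mem_neighborFinset, not_or, not_and, not_not]
  exact ⟨fun _ => hw, fun hvw => ne_of_adj_of_edist_eq_two hw hvw rfl⟩

theorem adj_redirect_of_adj (hw : (netGraph S).edist v w = 2) (hu : (netGraph S).Adj v u) :
    (netGraph (update S w (redirect S v w))).Adj w u :=
  netGraph_update_adj_self.mpr ⟨(ne_of_adj_of_edist_eq_two hw hu).symm,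
    Or.inl (mem_union_right _ (mem_neighborFinset _ _ _ |>.mpr hu))⟩

theorem edist_redirect_le_length_add_one (hw : (netGraph S).edist v w = 2)
    (hu : (netGraph S).Adj v u) (p : (netGraph S).Walk u y) (hp : w ∉ p.support) :
    (netGraph (update S w (redirect S v w))).edist w y ≤ p.length + 1 :=
  calc (netGraph (update S w (redirect S v w))).edist w y
      ≤ (netGraph (update S w (redirect S v w))).edist w u
        + (netGraph (update S w (redirect S v w))).edist u y := SimpleGraph.edist_triangle
    _ ≤ 1 + p.length := add_le_add (edist_eq_one_iff_adj.mpr (adj_redirect_of_adj hw hu)).le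
        (edist_netGraph_update_le_length p hp)
    _ = p.length + 1 := add_comm _ _

theorem edist_redirect_le_two (hw : (netGraph S).edist v w = 2) (hu : (netGraph S).Adj v u)
    (huz : (netGraph S).Adj u z) : (netGraph (update S w (redirect S v w))).edist w z ≤ 2 := by
  by_cases hz : z = w
  · simp [hz]
  simpa [one_add_one_eq_two] using edist_redirect_le_length_add_one hw hu (.cons huz .nil)
    (by simp [(ne_of_adj_of_edist_eq_two hw hu).symm, Ne.symm hz])

theorem edist_redirect_le_of_edist_le (hconn : (netGraph S).Connected)
    (hw : (netGraph S).edist v w = 2) (hyv : y ≠ v)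
    (hy : (netGraph S).edist v y ≤ (netGraph S).edist w y) :
    (netGraph (update S w (redirect S v w))).edist w y ≤ (netGraph S).edist v y := by
  obtain ⟨p, hp⟩ := (hconn v y).exists_walk_length_eq_edist
  have hwp : w ∉ p.support := fun hwp => by
    have hlong := p.edist_add_edist_le_length hwp
    rw [hw, hp] at hlong
    exact not_le.mpr (ENat.lt_add_left (edist_ne_top_iff_reachable.mpr (hconn w y)) two_pos)
      (hlong.trans hy)
  cases p with
  | nil => exact absurd rfl hyv
  | cons hvu q =>
    rw [← hp, Walk.length_cons, Nat.cast_add, Nat.cast_one]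
    exact edist_redirect_le_length_add_one hw hvu q fun h => hwp (by simp [h])

theorem mem_of_adj_of_not_adj_redirect (hz : (netGraph S).Adj w z)
    (hz' : ¬(netGraph (update S w (redirect S v w))).Adj w z) :
    z ∈ S w ∧ (netGraph S).edist v z = 2 := by
  obtain ⟨hwz, hz⟩ := hz
  simp only [netGraph_update_adj_self, redirect, mem_union, mem_filter, not_and, not_or] at hz'
  tauto

theorem edist_redirect_le_or (hconn : (netGraph S).Connected) (hyw : y ≠ w) :
    (netGraph (update S w (redirect S v w))).edist w y ≤ (netGraph S).edist w y ∨
      ∃ z ∈ S w, (netGraph S).edist v z = 2 ∧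
        (netGraph S).edist z y + 1 ≤ (netGraph S).edist w y ∧
        (netGraph (update S w (redirect S v w))).edist z y + 1 ≤ (netGraph S).edist w y := by
  obtain ⟨z, hwz, r, hwr, hr⟩ := (hconn w y).exists_adj_walk_notMem_support (Ne.symm hyw)
  have hr' : (netGraph (update S w (redirect S v w))).edist z y ≤ r.length :=
    edist_netGraph_update_le_length r hwr
  by_cases hz : (netGraph (update S w (redirect S v w))).Adj w z
  · left
    calc (netGraph (update S w (redirect S v w))).edist w y
        ≤ (netGraph (update S w (redirect S v w))).edist w z
          + (netGraph (update S w (redirect S v w))).edist z y := SimpleGraph.edist_triangle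
      _ ≤ 1 + r.length := add_le_add (edist_eq_one_iff_adj.mpr hz).le hr'
      _ = (netGraph S).edist w y := by rw [add_comm, hr]
  · right
    obtain ⟨hzS, hz2⟩ := mem_of_adj_of_not_adj_redirect hwz hz
    exact ⟨z, hzS, hz2, hr ▸ add_le_add_left r.edist_le 1, hr ▸ add_le_add_left hr' 1⟩

theorem edist_redirect_le_add_one (hconn : (netGraph S).Connected)
    (hw : (netGraph S).edist v w = 2) (y : V) :
    (netGraph (update S w (redirect S v w))).edist w y ≤ (netGraph S).edist w y + 1 := by
  by_cases hyw : y = w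
  · simp [hyw]
  obtain h | ⟨z, -, hz2, -, hzy⟩ := edist_redirect_le_or hconn hyw
  · exact h.trans le_self_add
  obtain ⟨-, -, u, hu⟩ := edist_eq_two_iff.mp hz2
  rw [mem_commonNeighbors] at hu
  calc (netGraph (update S w (redirect S v w))).edist w y
      ≤ (netGraph (update S w (redirect S v w))).edist w z
        + (netGraph (update S w (redirect S v w))).edist z y := SimpleGraph.edist_triangle
    _ ≤ 2 + (netGraph (update S w (redirect S v w))).edist z y := by
        gcongr
        exact edist_redirect_le_two hw hu.1 hu.2.symm
    _ = (netGraph (update S w (redirect S v w))).edist z y + 1 + 1 := by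
        rw [add_assoc, one_add_one_eq_two, add_comm]
    _ ≤ (netGraph S).edist w y + 1 := by gcongr

theorem edist_redirect_le_of_notMem (hconn : (netGraph S).Connected)
    (hw : (netGraph S).edist v w = 2)
    (hy : y ∉ {x ∈ S w | (netGraph S).edist v x = 2}.biUnion (closerVia S v)) :
    (netGraph (update S w (redirect S v w))).edist w y ≤ (netGraph S).edist w y := by
  by_cases hyw : y = w
  · simp [hyw]
  by_cases hyv : y = v
  · obtain ⟨-, -, u, hu⟩ := edist_eq_two_iff.mp hw
    rw [mem_commonNeighbors] at hu
    rw [hyv, show (netGraph S).edist w v = 2 from edist_comm.trans hw]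
    exact edist_redirect_le_two hw hu.1 hu.1.symm
  obtain h | ⟨z, hzS, hz2, hzy, -⟩ := edist_redirect_le_or hconn hyw
  · exact h
  by_cases hvy : (netGraph S).edist v y ≤ (netGraph S).edist w y
  · exact (edist_redirect_le_of_edist_le hconn hw hyv hvy).trans hvy
  refine absurd (mem_biUnion.mpr ⟨z, mem_filter.mpr ⟨hzS, hz2⟩, ?_⟩) hy
  simp only [closerVia, mem_filter, mem_univ, true_and]
  calc (netGraph S).edist z y + 2 = (netGraph S).edist z y + 1 + 1 := by
        rw [add_assoc, one_add_one_eq_two]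
    _ ≤ (netGraph S).edist w y + 1 := by gcongr
    _ ≤ (netGraph S).edist v y := Order.add_one_le_of_lt (not_le.mp hvy)

end Redirect

theorem stmt4_general {V : Type*} [Fintype V] [DecidableEq V] (α : ℝ) (hα : 2 < α)
    (hni : (⌊α⌋ : ℝ) < α)
    (S : V → Finset V) (hNash : IsNash α S)
    (hconn : (netGraph S).Connected)
    (v w : V) (hw : (netGraph S).edist v w = 2) :
    (((S w).filter (fun x => (netGraph S).edist v x = 2)).card : ℝ) ≤
      ({y : V | (netGraph S).edist v y = 1}.ncard : ℝ) * (α / (α - ⌊α⌋)) := by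
  have hα₀ : 0 ≤ α := by linarith
  set D := (S w).filter (fun x => (netGraph S).edist v x = 2)
  set A := D.biUnion (closerVia S v)
  have hA : (#A : ℝ) ≤ #D * ⌊α⌋ :=
    hNash.card_biUnion_closerVia_le hα₀ hconn fun x hx => (mem_filter.mp hx).2.ge
  have hcost := hNash.mul_card_add_card_le hα₀ hconn (notMem_redirect hw) (A := A) (B := ∅)
    fun y => by
      rw [if_neg (notMem_empty y), add_zero]
      split_ifs with hy
      · simpa using edist_redirect_le_add_one hconn hw y
      · simpa using edist_redirect_le_of_notMem hconn hw hy
  rw [card_empty, Nat.cast_zero, add_zero] at hcost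
  have hT : (#(redirect S v w) : ℝ) ≤
      #{x ∈ S w | (netGraph S).edist v x ≠ 2} + (netGraph S).degree v := by
    rw [← card_neighborFinset_eq_degree]
    exact_mod_cast card_union_le _ _
  have hSw : (#D : ℝ) + #{x ∈ S w | (netGraph S).edist v x ≠ 2} = #(S w) := by
    exact_mod_cast card_filter_add_card_filter_not _
  rw [ncard_setOf_edist_eq_one, ← mul_div_assoc, le_div_iff₀ (sub_pos.mpr hni)]
  linarith [mul_le_mul_of_nonneg_left hT hα₀, congrArg (α * ·) hSw]

/-- In a connected Nash equilibrium with non-integral `α > 2` and `n > α³`,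
any vertex `w` at distance 2 from `v` buys at most `|N₁| ⬝ α / (α - ⌊α⌋)` edges
to other vertices at distance 2 from `v`. -/
theorem stmt4 {V : Type*} [Fintype V] [DecidableEq V] (α : ℝ) (hα : 2 < α)
    (hni : (⌊α⌋ : ℝ) < α)
    (S : V → Finset V) (hS : ∀ v, v ∉ S v) (hNash : IsNash α S)
    (hconn : (netGraph S).Connected)
    (hn : α ^ 3 < (Fintype.card V : ℝ))
    (v w : V) (hw : (netGraph S).edist v w = 2) :
    (((S w).filter (fun x => (netGraph S).edist v x = 2)).card : ℝ) ≤
      ({y : V | (netGraph S).edist v y = 1}.ncard : ℝ) * (α / (α - ⌊α⌋)) :=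
  stmt4_general α hα hni S hNash hconn v w hw
end
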